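/- arXiv:1806.07347 — 2 statements merged into one kernel-verified Lean document; each statement's English description precedes it below -/
import Mathlib

section
/- Let $(\phi_k)_{k=1}^n$ be orthonormal in $L^2(S,\nu)$ and $K(u,v) = \sum_{k=1}^n \lambda_k \phi_k(u)\overline{\phi_k(v)}$ with all $\lambda_k \in [0,1]$. If $\int_S |K(u,v)|^2 \, d\nu(v) = K(u,u)$ for $\nu$-almost every $u \in S$, then for every $k$ with $\lambda_k \notin \{0,1\}$ we have $\phi_k = 0$ $\nu$-almost everywhere; in particular, $K$ agrees $\nu^2$-a.e. with a projection kernel. -/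
/-!
Expanding `|K(u, ·)|²` and integrating against the orthonormality relations gives
`∫ |K(u,v)|² dν(v) = ∑ₖ λₖ² |φₖ(u)|²`, while `K(u,u) = ∑ₖ λₖ |φₖ(u)|²`. The hypothesis therefore
says `∑ₖ (λₖ - λₖ²) |φₖ(u)|² = 0` for a.e. `u`; every term is nonnegative because `λₖ ∈ [0,1]`,
and `λₖ - λₖ² > 0` unless `λₖ ∈ {0,1}`.
-/

open MeasureTheory ComplexConjugate

section OrthonormalFamily

variable {S : Type*} [MeasurableSpace S] {ν : Measure S}

theorem memLp_two_of_integral_mul_conj_self_ne_zero {f : S → ℂ}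
    (hf : AEStronglyMeasurable f ν) (h : ∫ v, f v * conj (f v) ∂ν ≠ 0) : MemLp f 2 ν := by
  have hint : Integrable (fun v => ((‖f v‖ ^ 2 : ℝ) : ℂ)) ν := by
    by_contra hnot
    simp only [Complex.mul_conj', ← Complex.ofReal_pow] at h
    exact h (integral_undef hnot)
  exact (memLp_two_iff_integrable_sq_norm hf).2 <| by
    simpa only [RCLike.re_to_complex, Complex.ofReal_re] using hint.re

theorem integrable_mul_conj_of_memLp {f g : S → ℂ} (hf : MemLp f 2 ν) (hg : MemLp g 2 ν) :
    Integrable (fun v => f v * conj (g v)) ν :=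
  hf.integrable_mul (q := 2) hg.star

variable {ι : Type*} [Fintype ι] [DecidableEq ι] {φ : ι → S → ℂ}

theorem integral_sum_mul_conj_sum_of_orthonormal (hφ : ∀ k, MemLp (φ k) 2 ν)
    (horth : ∀ k l, ∫ v, φ k v * conj (φ l v) ∂ν = if k = l then 1 else 0) (c : ι → ℂ) :
    ∫ v, (∑ k, c k * conj (φ k v)) * conj (∑ k, c k * conj (φ k v)) ∂ν =
      ∑ k, c k * conj (c k) := by
  have hexpand : ∀ v, (∑ k, c k * conj (φ k v)) * conj (∑ k, c k * conj (φ k v)) =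
      ∑ k, ∑ l, c k * conj (c l) * (φ l v * conj (φ k v)) := by
    intro v
    simp only [map_sum, map_mul, Complex.conj_conj, Finset.sum_mul_sum]
    exact Finset.sum_congr rfl fun k _ => Finset.sum_congr rfl fun l _ => by ring
  simp only [hexpand]
  rw [integral_finsetSum _ fun k _ => integrable_finsetSum _ fun l _ =>
    (integrable_mul_conj_of_memLp (hφ l) (hφ k)).const_mul _]
  refine Finset.sum_congr rfl fun k _ => ?_
  rw [integral_finsetSum _ fun l _ => (integrable_mul_conj_of_memLp (hφ l) (hφ k)).const_mul _]
  simp [integral_const_mul, horth, eq_comm]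

theorem integral_norm_sum_mul_conj_sq_of_orthonormal (hφ : ∀ k, MemLp (φ k) 2 ν)
    (horth : ∀ k l, ∫ v, φ k v * conj (φ l v) ∂ν = if k = l then 1 else 0) (c : ι → ℂ) :
    ∫ v, ‖∑ k, c k * conj (φ k v)‖ ^ 2 ∂ν = ∑ k, ‖c k‖ ^ 2 := by
  have h := integral_sum_mul_conj_sum_of_orthonormal hφ horth c
  simp only [Complex.mul_conj', ← Complex.ofReal_pow] at h
  exact_mod_cast h

end OrthonormalFamily

theorem eq_zero_of_sum_sq_mul_eq_sum_mul {ι : Type*} [Fintype ι] {lam w : ι → ℝ}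
    (hlam : ∀ k, lam k ∈ Set.Icc (0 : ℝ) 1) (hw : ∀ k, 0 ≤ w k)
    (h : ∑ k, lam k ^ 2 * w k = ∑ k, lam k * w k) {k : ι} (hk0 : lam k ≠ 0) (hk1 : lam k ≠ 1) :
    w k = 0 := by
  have hterm_nonneg : ∀ j ∈ Finset.univ, 0 ≤ (lam j - lam j ^ 2) * w j := fun j _ =>
    mul_nonneg (by nlinarith [(hlam j).1, (hlam j).2]) (hw j)
  have hsum : ∑ j, (lam j - lam j ^ 2) * w j = 0 := by
    simp only [sub_mul, Finset.sum_sub_distrib, h, sub_self]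
  have hk := (Finset.sum_eq_zero_iff_of_nonneg hterm_nonneg).1 hsum k (Finset.mem_univ k)
  have hpos : 0 < lam k - lam k ^ 2 := by
    have := lt_of_le_of_ne (hlam k).1 (Ne.symm hk0)
    have := lt_of_le_of_ne (hlam k).2 hk1
    nlinarith
  exact (mul_eq_zero.1 hk).resolve_left hpos.ne'

theorem sum_ofReal_mul_eq_sum_filter_eq_one {ι : Type*} [Fintype ι] {lam : ι → ℝ} {a : ι → ℂ}
    (h : ∀ k, lam k ≠ 0 → lam k ≠ 1 → a k = 0) :
    ∑ k, (lam k : ℂ) * a k = ∑ k ∈ Finset.univ.filter (fun k => lam k = 1), a k := by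
  classical
  rw [Finset.sum_filter]
  refine Finset.sum_congr rfl fun k _ => ?_
  by_cases hk1 : lam k = 1
  · simp [hk1]
  by_cases hk0 : lam k = 0
  · simp [hk0]
  · simp [h k hk0 hk1, hk1]

theorem pu_eq_one_ae_implies_projection_general {S : Type*} [MeasurableSpace S]
    (ν : Measure S) (n : ℕ) (φ : Fin n → S → ℂ)
    (hmeas : ∀ k, Measurable (φ k))
    (horth : ∀ k l, ∫ v, φ k v * starRingEnd ℂ (φ l v) ∂ν =
      if k = l then 1 else 0)
    (lam : Fin n → ℝ) (hlam : ∀ k, lam k ∈ Set.Icc (0 : ℝ) 1)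
    (K : S → S → ℂ)
    (hK : ∀ u v, K u v = ∑ k, (lam k : ℂ) * φ k u * starRingEnd ℂ (φ k v))
    (hone : ∀ᵐ u ∂ν, (∫ v, ‖K u v‖ ^ 2 ∂ν) = (K u u).re) :
    (∀ k, lam k ≠ 0 → lam k ≠ 1 → (∀ᵐ v ∂ν, φ k v = 0)) ∧
      (∀ᵐ p ∂(ν.prod ν), K p.1 p.2 =
        ∑ k ∈ Finset.univ.filter (fun k => lam k = 1),
          φ k p.1 * starRingEnd ℂ (φ k p.2)) := by
  have hL2 : ∀ k, MemLp (φ k) 2 ν := fun k =>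
    memLp_two_of_integral_mul_conj_self_ne_zero (hmeas k).aestronglyMeasurable (by simp [horth])
  have hzero : ∀ᵐ u ∂ν, ∀ k, lam k ≠ 0 → lam k ≠ 1 → φ k u = 0 := by
    filter_upwards [hone] with u hu k hk0 hk1
    have hsq : ∑ k, lam k ^ 2 * ‖φ k u‖ ^ 2 = ∑ k, lam k * ‖φ k u‖ ^ 2 := by
      have hdiag : (K u u).re = ∑ k, lam k * ‖φ k u‖ ^ 2 := by
        simp [hK, mul_assoc, Complex.mul_conj', ← Complex.ofReal_pow]
      rw [← hdiag, ← hu]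
      simp only [hK u, integral_norm_sum_mul_conj_sq_of_orthonormal hL2 horth, norm_mul,
        Complex.norm_real, Real.norm_eq_abs, mul_pow, sq_abs]
    exact norm_eq_zero.1 <| pow_eq_zero_iff two_ne_zero |>.1 <|
      eq_zero_of_sum_sq_mul_eq_sum_mul hlam (fun _ => by positivity) hsq hk0 hk1
  refine ⟨fun k hk0 hk1 => hzero.mono fun u hu => hu k hk0 hk1, ?_⟩
  filter_upwards [Measure.quasiMeasurePreserving_fst.ae hzero] with p hp
  simp only [hK, mul_assoc]
  exact sum_ofReal_mul_eq_sum_filter_eq_one fun k hk0 hk1 => by simp [hp k hk0 hk1]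

/-- If `K(u,v) = ∑ₖ λₖ φₖ(u) conj(φₖ(v))` with `λₖ ∈ [0,1]` and orthonormal `φₖ`
satisfies `∫ |K(u,v)|² dν(v) = K(u,u)` for `ν`-a.e. `u`, then every eigenfunction
with eigenvalue not in `{0,1}` vanishes `ν`-a.e.; in particular `K` agrees
`ν²`-a.e. with the projection kernel onto the eigenfunctions with `λₖ = 1`. -/
theorem pu_eq_one_ae_implies_projection {S : Type*} [MeasurableSpace S]
    (ν : Measure S) [SigmaFinite ν] (n : ℕ) (φ : Fin n → S → ℂ)
    (hmeas : ∀ k, Measurable (φ k))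
    (horth : ∀ k l, ∫ v, φ k v * starRingEnd ℂ (φ l v) ∂ν =
      if k = l then 1 else 0)
    (lam : Fin n → ℝ) (hlam : ∀ k, lam k ∈ Set.Icc (0 : ℝ) 1)
    (K : S → S → ℂ)
    (hK : ∀ u v, K u v = ∑ k, (lam k : ℂ) * φ k u * starRingEnd ℂ (φ k v))
    (hone : ∀ᵐ u ∂ν, (∫ v, ‖K u v‖ ^ 2 ∂ν) = (K u u).re) :
    (∀ k, lam k ≠ 0 → lam k ≠ 1 → (∀ᵐ v ∂ν, φ k v = 0)) ∧
      (∀ᵐ p ∂(ν.prod ν), K p.1 p.2 =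
        ∑ k ∈ Finset.univ.filter (fun k => lam k = 1),
          φ k p.1 * starRingEnd ℂ (φ k p.2)) :=
  pu_eq_one_ae_implies_projection_general ν n φ hmeas horth lam hlam K hK hone
end

section
/- Let $\alpha > 0$, $\beta > 0$ with $\alpha\beta \le 1$, and define the scaled Ginibre kernel $K(v,w) = \frac{\alpha}{\pi}\exp\left(\frac{v\overline{w}}{\beta} - \frac{|v|^2+|w|^2}{2\beta}\right)$ on $\mathbb{C}$. Then for every $u \in \mathbb{C}$, $p_u := \frac{1}{K(u,u)}\int_{\mathbb{C}} |K(u,v)|^2 \, dv = \alpha\beta$, and the normalized function $f_u(v) = |K(u,v)|^2 / \int_{\mathbb{C}}|K(u,w)|^2 dw$ equals $\frac{1}{\pi\beta}\exp(-|v-u|^2/\beta)$. -/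
/-!
Since `Re (u * conj v) = (‖u‖² + ‖v‖² - ‖v - u‖²) / 2`, the kernel satisfies
`‖K u v‖² = (α/π)² exp (-‖v - u‖² / β)`, and `K u u = α/π`. Both claims then reduce to the
Gaussian integral `∫ exp (-‖v - u‖² / β) dv = π β` over `ℂ ≅ ℝ²`.
-/

open MeasureTheory

theorem integral_rexp_neg_sq_norm_sub_div {V : Type*} [NormedAddCommGroup V]
    [InnerProductSpace ℝ V] [FiniteDimensional ℝ V] [MeasurableSpace V] [BorelSpace V]
    {β : ℝ} (hβ : 0 < β) (u : V) :
    ∫ v : V, Real.exp (-‖v - u‖ ^ 2 / β) = (Real.pi * β) ^ (Module.finrank ℝ V / 2 : ℝ) := by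
  have h := GaussianFourier.integral_rexp_neg_mul_sq_norm (V := V) (inv_pos.mpr hβ)
  rw [div_inv_eq_mul] at h
  rw [integral_sub_right_eq_self (fun v => Real.exp (-‖v‖ ^ 2 / β)) u, ← h]
  simp_rw [neg_div, div_eq_inv_mul, neg_mul]

theorem integral_rexp_neg_sq_norm_sub_div_complex {β : ℝ} (hβ : 0 < β) (u : ℂ) :
    ∫ v : ℂ, Real.exp (-‖v - u‖ ^ 2 / β) = Real.pi * β := by
  rw [integral_rexp_neg_sq_norm_sub_div hβ, Complex.finrank_real_complex]
  norm_num

noncomputable def scaledGinibreKernel (α β : ℝ) (v w : ℂ) : ℂ :=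
  ((α / Real.pi : ℝ) : ℂ) *
    Complex.exp (v * starRingEnd ℂ w / (β : ℂ) - (((‖v‖ ^ 2 + ‖w‖ ^ 2 : ℝ) : ℂ)) / (2 * (β : ℂ)))

theorem scaledGinibreKernel_self (α β : ℝ) (u : ℂ) :
    scaledGinibreKernel α β u u = ((α / Real.pi : ℝ) : ℂ) := by
  rw [scaledGinibreKernel, Complex.mul_conj, Complex.normSq_eq_norm_sq, ← two_mul,
    Complex.ofReal_mul, Complex.ofReal_ofNat, mul_div_mul_left _ _ two_ne_zero, sub_self,
    Complex.exp_zero, mul_one]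

theorem norm_scaledGinibreKernel_sq (α β : ℝ) (u v : ℂ) :
    ‖scaledGinibreKernel α β u v‖ ^ 2 =
      (α / Real.pi) ^ 2 * Real.exp (-‖v - u‖ ^ 2 / β) := by
  have hre : (u * starRingEnd ℂ v / (β : ℂ) -
      (((‖u‖ ^ 2 + ‖v‖ ^ 2 : ℝ) : ℂ)) / (2 * (β : ℂ))).re = -‖v - u‖ ^ 2 / (2 * β) := by
    rw [Complex.sub_re, Complex.div_ofReal_re, ← Complex.ofReal_ofNat, ← Complex.ofReal_mul,
      Complex.div_ofReal_re, Complex.ofReal_re, norm_sub_rev, ← Complex.normSq_eq_norm_sq,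
      ← Complex.normSq_eq_norm_sq, ← Complex.normSq_eq_norm_sq, Complex.normSq_sub]
    ring
  rw [scaledGinibreKernel, norm_mul, Complex.norm_real, Complex.norm_exp, hre, mul_pow,
    Real.norm_eq_abs, sq_abs, ← Real.exp_nat_mul]
  congr 2
  ring

theorem integral_norm_scaledGinibreKernel_sq (α : ℝ) {β : ℝ} (hβ : 0 < β) (u : ℂ) :
    ∫ v : ℂ, ‖scaledGinibreKernel α β u v‖ ^ 2 = (α / Real.pi) ^ 2 * (Real.pi * β) := by
  simp_rw [norm_scaledGinibreKernel_sq]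
  rw [integral_const_mul, integral_rexp_neg_sq_norm_sub_div_complex hβ]

theorem scaled_ginibre_pu_and_density_general
    (α β : ℝ) (hα : 0 < α) (hβ : 0 < β)
    (K : ℂ → ℂ → ℂ)
    (hK : ∀ v w, K v w = ((α / Real.pi : ℝ) : ℂ) *
      Complex.exp (v * starRingEnd ℂ w / (β : ℂ) -
        (((‖v‖ ^ 2 + ‖w‖ ^ 2 : ℝ) : ℂ)) / (2 * (β : ℂ)))) :
    ∀ u : ℂ,
      (1 / (K u u).re) * (∫ v : ℂ, ‖K u v‖ ^ 2) = α * β ∧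
      ∀ v : ℂ,
        ‖K u v‖ ^ 2 / (∫ w : ℂ, ‖K u w‖ ^ 2) =
          (1 / (Real.pi * β)) * Real.exp (-(‖v - u‖ ^ 2) / β) := by
  obtain rfl : K = scaledGinibreKernel α β := funext₂ hK
  intro u
  have hc : (α / Real.pi) ^ 2 ≠ 0 := by positivity
  rw [integral_norm_scaledGinibreKernel_sq α hβ u]
  refine ⟨?_, fun v => ?_⟩
  · rw [scaledGinibreKernel_self, Complex.ofReal_re]
    field_simp
  · rw [norm_scaledGinibreKernel_sq, mul_div_mul_left _ _ hc, neg_div, div_eq_inv_mul, one_div]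

/-- For the scaled `β`-Ginibre kernel
`K(v,w) = (α/π) exp(v conj(w)/β - (|v|²+|w|²)/(2β))` with `α, β > 0`, `αβ ≤ 1`:
`p_u = (1/K(u,u)) ∫ |K(u,v)|² dv = αβ`, and the conditional density of the
removed point is `f_u(v) = (1/(πβ)) exp(-|v-u|²/β)`, i.e. `N_ℂ(u,β)`. -/
theorem scaled_ginibre_pu_and_density
    (α β : ℝ) (hα : 0 < α) (hβ : 0 < β) (hαβ : α * β ≤ 1)
    (K : ℂ → ℂ → ℂ)
    (hK : ∀ v w, K v w = ((α / Real.pi : ℝ) : ℂ) *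
      Complex.exp (v * starRingEnd ℂ w / (β : ℂ) -
        (((‖v‖ ^ 2 + ‖w‖ ^ 2 : ℝ) : ℂ)) / (2 * (β : ℂ)))) :
    ∀ u : ℂ,
      (1 / (K u u).re) * (∫ v : ℂ, ‖K u v‖ ^ 2) = α * β ∧
      ∀ v : ℂ,
        ‖K u v‖ ^ 2 / (∫ w : ℂ, ‖K u w‖ ^ 2) =
          (1 / (Real.pi * β)) * Real.exp (-(‖v - u‖ ^ 2) / β) :=
  scaled_ginibre_pu_and_density_general α β hα hβ K hK
end
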